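/- arXiv:hep-th/9710202 — 9 statements merged into one kernel-verified Lean document; each statement's English description precedes it below -/
import Mathlib

section
/- Every symmetric unitary complex n×n matrix S (i.e., Sᵀ = S and S* S = I_n) can be written as S = W Wᵀ for some unitary n×n complex matrix W. -/
open Matrix Polynomial
open scoped Matrix.Norms.L2Operator

/-!
Take `W = √S`, the principal square root `z ↦ z ^ (1/2)` applied to `S` by the continuous
functional calculus. The spectrum of `S` lies on the unit circle, where this square root has
modulus one, so `W` is unitary with `W² = S`. The spectrum is also finite, so `W` is a polynomial
in `S` (Lagrange interpolation on the spectrum) and is therefore symmetric with `S`;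
hence `W Wᵀ = W² = S`.
-/

theorem Matrix.transpose_aeval {n R : Type*} [Fintype n] [DecidableEq n] [CommSemiring R]
    (A : Matrix n n R) (p : R[X]) : (aeval A p)ᵀ = aeval Aᵀ p := by
  induction p using Polynomial.induction_on' with
  | add p q hp hq => simp [hp, hq]
  | monomial k c => simp [aeval_monomial, Algebra.algebraMap_eq_smul_one, transpose_pow]

theorem exists_cfc_eq_aeval_of_finite_spectrum {𝕜 A : Type*} {p : A → Prop} [Field 𝕜]
    [StarRing 𝕜] [MetricSpace 𝕜] [IsTopologicalRing 𝕜] [ContinuousStar 𝕜] [Ring A] [StarRing A]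
    [TopologicalSpace A] [Algebra 𝕜 A] [ContinuousFunctionalCalculus 𝕜 A p]
    (f : 𝕜 → 𝕜) (a : A) (hfin : (spectrum 𝕜 a).Finite) (ha : p a := by cfc_tac) :
    ∃ q : 𝕜[X], cfc f a = aeval a q := by
  classical
  refine ⟨Lagrange.interpolate hfin.toFinset id f, ?_⟩
  rw [← cfc_polynomial _ a]
  exact cfc_congr fun z hz => (Lagrange.eval_interpolate_at_node f (Set.injOn_id _)
    (hfin.mem_toFinset.mpr hz)).symm

theorem Matrix.transpose_cfc_of_transpose_eq {n : Type*} [Fintype n] [DecidableEq n]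
    (f : ℂ → ℂ) {S : Matrix n n ℂ} (hsym : Sᵀ = S) [IsStarNormal S] :
    (cfc f S)ᵀ = cfc f S := by
  obtain ⟨q, hq⟩ := exists_cfc_eq_aeval_of_finite_spectrum f S S.finite_spectrum
  rw [hq, transpose_aeval, hsym]

theorem Complex.norm_cpow_inv_two_sq (z : ℂ) : ‖z ^ (2⁻¹ : ℂ)‖ ^ 2 = ‖z‖ := by
  rw [← norm_pow, Complex.cpow_ofNat_inv_pow]

theorem Complex.cpow_inv_two_mem_unitary {z : ℂ} (hz : z ∈ unitary ℂ) :
    z ^ (2⁻¹ : ℂ) ∈ unitary ℂ := by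
  rw [Unitary.mem_iff_star_mul_self, Complex.star_def, Complex.conj_mul', ← Complex.ofReal_pow,
    Complex.norm_cpow_inv_two_sq, CStarRing.norm_of_mem_unitary hz, Complex.ofReal_one]

section

variable {A : Type*} [Ring A] [StarRing A] [TopologicalSpace A] [Algebra ℂ A]
  [ContinuousFunctionalCalculus ℂ A IsStarNormal]

-- The principal square root jumps along the negative real axis; finiteness of the spectrum is
-- what makes it continuous there, so that `cfc` does not return its junk value `0`.
theorem cfc_cpow_inv_two_sq {a : A} (hfin : (spectrum ℂ a).Finite)
    (ha : IsStarNormal a := by cfc_tac) :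
    cfc (fun z : ℂ => z ^ (2⁻¹ : ℂ)) a ^ 2 = a := by
  rw [← cfc_pow _ _ a (hfin.continuousOn _)]
  simp only [Complex.cpow_ofNat_inv_pow]
  exact cfc_id' ℂ a

theorem cfc_cpow_inv_two_mem_unitary {u : A} (hu : u ∈ unitary A)
    (hfin : (spectrum ℂ u).Finite) :
    cfc (fun z : ℂ => z ^ (2⁻¹ : ℂ)) u ∈ unitary A := by
  have : IsStarNormal u := isStarNormal_of_mem_unitary hu
  rw [cfc_unitary_iff _ u (hf := hfin.continuousOn _)]
  intro z hz
  exact Unitary.star_mul_self_of_mem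
    (Complex.cpow_inv_two_mem_unitary (spectrum_subset_unitary_of_mem_unitary hu hz))

end

/-- Takagi factorization for symmetric unitary matrices: every symmetric
unitary complex matrix `S` factors as `S = W * Wᵀ` with `W` unitary. -/
theorem stmt_1 (n : ℕ) (S : Matrix (Fin n) (Fin n) ℂ)
    (hsym : Sᵀ = S) (hunit : Sᴴ * S = 1) :
    ∃ W : Matrix (Fin n) (Fin n) ℂ, Wᴴ * W = 1 ∧ S = W * Wᵀ := by
  have hS : S ∈ unitary (Matrix (Fin n) (Fin n) ℂ) := mem_unitaryGroup_iff'.mpr hunit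
  have : IsStarNormal S := isStarNormal_of_mem_unitary hS
  refine ⟨cfc (fun z : ℂ => z ^ (2⁻¹ : ℂ)) S,
    Unitary.star_mul_self_of_mem (cfc_cpow_inv_two_mem_unitary hS S.finite_spectrum), ?_⟩
  rw [transpose_cfc_of_transpose_eq _ hsym, ← sq, cfc_cpow_inv_two_sq S.finite_spectrum]
end

section
/- Let p ≥ 1 and n ≥ 1, and let N_1, …, N_p be n×n real matrices that are pairwise anticommuting (N_i N_j = − N_j N_i for all i ≠ j) and satisfy N_i² = I_n for all i. Then n is divisible by 2^⌊p/2⌋. (Any matrix representation of a rank-p Clifford algebra with identity is built from blocks of dimension 2^ν, where p = 2ν or p = 2ν+1.) -/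
/-!
Complexify and induct on `p` in steps of two. For anticommuting involutions `a = N₁`, `b = N₂`,
`b a b = -a` forces `trace a = 0`, so the projection `(1 + a) / 2` shows that the `+1`-eigenspace
`W` of `a` has half the dimension. With `i² = -1`, the operators `i b N_k` (`k ≥ 3`) are again pairwise anticommuting
involutions, and they commute with `a`, so they restrict to a family of `p - 2` of them on `W`.
-/

open Matrix Module

structure IsCliffordFamily {A ι : Type*} [Ring A] (f : ι → A) : Prop where
  mul_self : ∀ i, f i * f i = 1
  anticomm : ∀ i j, i ≠ j → f i * f j = -(f j * f i)

section Anticommuting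

variable {A : Type*} [Ring A] {a b x y : A}

theorem mul_mul_mul_eq_neg_of_anticomm (hb : b * b = 1) (hx : x * b = -(b * x)) :
    b * x * (b * y) = -(x * y) :=
  calc b * x * (b * y) = b * (x * b) * y := by noncomm_ring
    _ = -(b * b * x * y) := by rw [hx]; noncomm_ring
    _ = -(x * y) := by rw [hb, one_mul]

theorem commute_mul_of_anticomm (hb : a * b = -(b * a)) (hx : x * a = -(a * x)) :
    Commute a (b * x) := by
  rw [Commute, SemiconjBy, mul_assoc, hx, ← mul_assoc, hb]
  noncomm_ring

end Anticommuting

namespace IsCliffordFamily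

variable {A ι : Type*} [Ring A] {f : ι → A}

theorem map {B F : Type*} [Ring B] [FunLike F A B] [RingHomClass F A B] (hf : IsCliffordFamily f)
    (φ : F) : IsCliffordFamily (φ ∘ f) where
  mul_self i := by simp [← map_mul, hf.mul_self]
  anticomm i j hij := by simp [← map_mul, hf.anticomm i j hij]

theorem twist {K : Type*} [CommRing K] [Algebra K A] {c : K} (hc : c * c = -1) {p : ℕ}
    {f : Fin (p + 2) → A} (hf : IsCliffordFamily f) :
    IsCliffordFamily fun k : Fin p ↦ c • (f 1 * f k.succ.succ) := by
  have hne (k : Fin p) : k.succ.succ ≠ 1 := by simp [Fin.ext_iff]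
  have hmul (j k : Fin p) : c • (f 1 * f j.succ.succ) * c • (f 1 * f k.succ.succ) =
      f j.succ.succ * f k.succ.succ := by
    rw [smul_mul_smul, hc, mul_mul_mul_eq_neg_of_anticomm (hf.mul_self 1)
      (hf.anticomm _ _ (hne j)), neg_smul, one_smul, neg_neg]
  refine ⟨fun k ↦ ?_, fun j k hjk ↦ ?_⟩
  · rw [hmul, hf.mul_self]
  · rw [hmul, hmul, hf.anticomm _ _ (Fin.succ_injective _ |>.ne <| Fin.succ_injective _ |>.ne hjk)]

theorem commute_twist {K : Type*} [CommRing K] [Algebra K A] (c : K) {p : ℕ}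
    {f : Fin (p + 2) → A} (hf : IsCliffordFamily f) (k : Fin p) :
    Commute (f 0) (c • (f 1 * f k.succ.succ)) :=
  (commute_mul_of_anticomm (hf.anticomm 0 1 (by simp))
    (hf.anticomm _ 0 (Fin.succ_ne_zero _))).smul_right c

end IsCliffordFamily

section Endomorphisms

variable {K V : Type*} [Field K] [AddCommGroup V] [Module K V]

theorem IsCliffordFamily.restrict {ι : Type*} {f : ι → End K V} (hf : IsCliffordFamily f)
    {W : Submodule K V} (hW : ∀ i, Set.MapsTo (f i) W W) :
    IsCliffordFamily fun i ↦ (f i).restrict (hW i) := by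
  refine ⟨fun i ↦ ?_, fun i j hij ↦ ?_⟩ <;> refine LinearMap.ext fun x ↦ Subtype.ext ?_
  · simp only [End.mul_apply, End.one_apply]
    exact congr($(hf.mul_self i) x)
  · simp only [End.mul_apply, LinearMap.neg_apply, Submodule.coe_neg]
    exact congr($(hf.anticomm i j hij) x)

variable [CharZero K]

theorem LinearMap.trace_eq_zero_of_anticomm {a b : End K V} (hb : b * b = 1)
    (hab : a * b = -(b * a)) : LinearMap.trace K V a = 0 := by
  have h : LinearMap.trace K V a = -LinearMap.trace K V a :=
    calc LinearMap.trace K V a = LinearMap.trace K V (b * (a * b)) := by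
          rw [LinearMap.trace_mul_comm, mul_assoc, hb, mul_one]
      _ = -LinearMap.trace K V a := by
          rw [hab, mul_neg, ← mul_assoc, hb, one_mul, map_neg]
  exact CharZero.eq_neg_self_iff.mp h

theorem finrank_eq_two_mul_finrank_eigenspace [FiniteDimensional K V] {a b : End K V}
    (ha : a * a = 1) (hb : b * b = 1) (hab : a * b = -(b * a)) :
    finrank K V = 2 * finrank K (End.eigenspace a 1) := by
  have hproj : LinearMap.IsProj (End.eigenspace a 1) ((2⁻¹ : K) • (1 + a)) := by
    refine ⟨fun x ↦ ?_, fun x hx ↦ ?_⟩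
    · rw [End.mem_eigenspace_iff]
      simp [← End.mul_apply, ha, add_comm]
    · rw [End.mem_eigenspace_iff, one_smul] at hx
      simp only [LinearMap.smul_apply, LinearMap.add_apply, End.one_apply, hx]
      module
  have htrace := hproj.trace
  rw [map_smul, map_add, LinearMap.trace_one, LinearMap.trace_eq_zero_of_anticomm hb hab]
    at htrace
  have : (finrank K V : K) = 2 * finrank K (End.eigenspace a 1) := by
    rw [← htrace]; simp
  exact_mod_cast this

theorem IsCliffordFamily.two_pow_dvd_finrank [FiniteDimensional K V] {c : K} (hc : c * c = -1)
    {p : ℕ} {f : Fin p → End K V} (hf : IsCliffordFamily f) : 2 ^ (p / 2) ∣ finrank K V := by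
  induction p using Nat.twoStepInduction generalizing V with
  | zero => simp
  | one => simp
  | more p ih _ =>
    have hW (k : Fin p) : Set.MapsTo (c • (f 1 * f k.succ.succ)) (End.eigenspace (f 0) 1)
        (End.eigenspace (f 0) 1) :=
      End.mapsTo_genEigenspace_of_comm (hf.commute_twist c k) 1 1
    obtain ⟨m, hm⟩ := ih ((hf.twist hc).restrict hW)
    rw [finrank_eq_two_mul_finrank_eigenspace (hf.mul_self 0) (hf.mul_self 1)
      (hf.anticomm 0 1 (by simp)), hm, Nat.add_div_right _ two_pos, pow_succ]
    exact ⟨m, by ring⟩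

end Endomorphisms

theorem stmt_2_general (p n : ℕ)
    (N : Fin p → Matrix (Fin n) (Fin n) ℝ)
    (hanti : ∀ i j, i ≠ j → N i * N j = - (N j * N i))
    (hinv : ∀ i, N i * N i = 1) :
    2 ^ (p / 2) ∣ n := by
  have hN : IsCliffordFamily N := ⟨hinv, hanti⟩
  have hNℂ := hN.map (toLinAlgEquiv'.toRingHom.comp Complex.ofRealHom.mapMatrix)
  simpa using hNℂ.two_pow_dvd_finrank Complex.I_mul_I

/-- If `N₁, …, N_p` are pairwise anticommuting real `n × n` involutions, then
`n` is divisible by `2 ^ ⌊p/2⌋`. -/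
theorem stmt_2 (p n : ℕ) (hp : 1 ≤ p) (hn : 1 ≤ n)
    (N : Fin p → Matrix (Fin n) (Fin n) ℝ)
    (hanti : ∀ i j, i ≠ j → N i * N j = - (N j * N i))
    (hinv : ∀ i, N i * N i = 1) :
    2 ^ (p / 2) ∣ n :=
  stmt_2_general p n N hanti hinv
end

section
/- For every natural number ν there exist ν + 1 real symmetric 2^ν × 2^ν matrices N_1, …, N_{ν+1} that are pairwise anticommuting (N_i N_j = − N_j N_i for i ≠ j) and satisfy N_i² = I for all i. (A rank-p Clifford algebra, p = 2ν or p = 2ν+1, possesses a 2^ν-dimensional matrix representation containing ν + 1 real, symmetric, pairwise anticommuting elements.) -/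
/-!
Kronecker products give the inductive step: if `N₁, …, N_k` are symmetric pairwise anticommuting
involutions of size `n` and `X, Z` are the Pauli matrices, then `N₁ ⊗ X, …, N_k ⊗ X, 1 ⊗ Z` are
`k + 1` such matrices of size `2n`, since `X` and `Z` are symmetric anticommuting involutions.
Starting from the `1 × 1` identity, `ν` steps give `ν + 1` matrices of size `2 ^ ν`.
-/

open Matrix Kronecker

namespace Matrix

section Neg

variable {α l m n p : Type*} [Mul α] [HasDistribNeg α]

theorem neg_kronecker (A : Matrix l m α) (B : Matrix n p α) : (-A) ⊗ₖ B = -(A ⊗ₖ B) := by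
  ext ⟨a, b⟩ ⟨c, d⟩
  simp

theorem kronecker_neg (A : Matrix l m α) (B : Matrix n p α) : A ⊗ₖ (-B) = -(A ⊗ₖ B) := by
  ext ⟨a, b⟩ ⟨c, d⟩
  simp

end Neg

variable {R : Type*} [CommRing R] {ι κ n m : Type*}
  [Fintype n] [DecidableEq n] [Fintype m] [DecidableEq m]

structure IsSymmAnticommInvolutions (N : ι → Matrix n n R) : Prop where
  transpose_eq : ∀ i, (N i)ᵀ = N i
  mul_self : ∀ i, N i * N i = 1
  anticomm : ∀ i j, i ≠ j → N i * N j = -(N j * N i)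

def pauli : Fin 2 → Matrix (Fin 2) (Fin 2) R := ![!![0, 1; 1, 0], !![1, 0; 0, -1]]

theorem isSymmAnticommInvolutions_pauli : IsSymmAnticommInvolutions (pauli (R := R)) where
  transpose_eq i := by
    fin_cases i <;> ext a b <;> fin_cases a <;> fin_cases b <;> simp [pauli]
  mul_self i := by
    fin_cases i <;> simp [pauli, one_fin_two]
  anticomm i j hij := by
    fin_cases i <;> fin_cases j <;> simp_all [pauli]

namespace IsSymmAnticommInvolutions

theorem of_subsingleton [Subsingleton ι] :
    IsSymmAnticommInvolutions (fun _ : ι ↦ (1 : Matrix n n R)) where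
  transpose_eq _ := transpose_one
  mul_self _ := one_mul 1
  anticomm i j hij := absurd (Subsingleton.elim i j) hij

variable {N : ι → Matrix n n R}

theorem comp_injective (hN : IsSymmAnticommInvolutions N) {f : κ → ι} (hf : f.Injective) :
    IsSymmAnticommInvolutions (N ∘ f) where
  transpose_eq i := hN.transpose_eq (f i)
  mul_self i := hN.mul_self (f i)
  anticomm i j hij := hN.anticomm (f i) (f j) (hf.ne hij)

theorem reindex (hN : IsSymmAnticommInvolutions N) (e : n ≃ m) :
    IsSymmAnticommInvolutions (fun i ↦ reindexAlgEquiv R R e (N i)) where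
  transpose_eq i := by
    rw [coe_reindexAlgEquiv, transpose_reindex, hN.transpose_eq]
  mul_self i := by
    rw [← map_mul, hN.mul_self, map_one]
  anticomm i j hij := by
    rw [← map_mul, ← map_mul, hN.anticomm i j hij, map_neg]

theorem kronecker_extend (hN : IsSymmAnticommInvolutions N) {M : Fin 2 → Matrix m m R}
    (hM : IsSymmAnticommInvolutions M) :
    IsSymmAnticommInvolutions
      (fun o : Option ι ↦ o.elim ((1 : Matrix n n R) ⊗ₖ M 1) (fun i ↦ N i ⊗ₖ M 0)) where
  transpose_eq
    | none => by
      rw [Option.elim_none, ← kroneckerMap_transpose, transpose_one, hM.transpose_eq]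
    | some i => by
      rw [Option.elim_some, ← kroneckerMap_transpose, hN.transpose_eq, hM.transpose_eq]
  mul_self
    | none => by
      rw [Option.elim_none, ← mul_kronecker_mul, one_mul, hM.mul_self, one_kronecker_one]
    | some i => by
      rw [Option.elim_some, ← mul_kronecker_mul, hN.mul_self, hM.mul_self, one_kronecker_one]
  anticomm
    | none, none, h => absurd rfl h
    | none, some j, _ => by
      simp only [Option.elim_none, Option.elim_some]
      rw [← mul_kronecker_mul, ← mul_kronecker_mul, one_mul, mul_one,
        hM.anticomm 1 0 (by decide), kronecker_neg]
    | some i, none, _ => by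
      simp only [Option.elim_none, Option.elim_some]
      rw [← mul_kronecker_mul, ← mul_kronecker_mul, one_mul, mul_one,
        hM.anticomm 0 1 (by decide), kronecker_neg]
    | some i, some j, h => by
      simp only [Option.elim_some]
      rw [← mul_kronecker_mul, ← mul_kronecker_mul, hN.anticomm i j (mt (congrArg some) h),
        neg_kronecker]

end IsSymmAnticommInvolutions

theorem exists_isSymmAnticommInvolutions_fin_two_pow (ν : ℕ) :
    ∃ N : Fin (ν + 1) → Matrix (Fin (2 ^ ν)) (Fin (2 ^ ν)) R, IsSymmAnticommInvolutions N := by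
  induction ν with
  | zero => exact ⟨_, .of_subsingleton (ι := Fin 1)⟩
  | succ ν ih =>
    obtain ⟨N, hN⟩ := ih
    let e : Fin (2 ^ ν) × Fin 2 ≃ Fin (2 ^ (ν + 1)) :=
      finProdFinEquiv.trans (finCongr (pow_succ 2 ν).symm)
    exact ⟨_, ((hN.kronecker_extend isSymmAnticommInvolutions_pauli).comp_injective
      (finSuccEquiv (ν + 1)).injective).reindex e⟩

end Matrix

/-- For every `ν` there exist `ν + 1` real symmetric `2^ν × 2^ν` matrices that
are pairwise anticommuting involutions. -/
theorem stmt_3 (ν : ℕ) :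
    ∃ N : Fin (ν + 1) → Matrix (Fin (2 ^ ν)) (Fin (2 ^ ν)) ℝ,
      (∀ i, (N i)ᵀ = N i) ∧
      (∀ i, N i * N i = 1) ∧
      (∀ i j, i ≠ j → N i * N j = - (N j * N i)) := by
  obtain ⟨N, hN⟩ := exists_isSymmAnticommInvolutions_fin_two_pow (R := ℝ) ν
  exact ⟨N, hN.transpose_eq, hN.mul_self, hN.anticomm⟩
end

section
/- There do not exist four 4×4 real symmetric matrices N_1, N_2, N_3, N_4 that are pairwise anticommuting (N_i N_j = − N_j N_i for i ≠ j) and satisfy N_i² = I_4 for all i. (A Clifford algebra represented on 4-dimensional blocks admits at most 3 real, symmetric, pairwise anticommuting elements.) -/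
/-!
Put `P = N₀ N₁ N₂ N₃`. Reversing the four factors takes an even number of transpositions, so
`P` is symmetric and `P * P = Pᵀ * P = 1`; moving one `N c` across `P` takes an odd number, so
`N c * P = -(P * N c)` and every `N c * P` is skew-symmetric. Fix `v ≠ 0`. Since `N i * N j` is
skew for `i ≠ j`, the vectors `N₀ v, …, N₃ v` are pairwise orthogonal and nonzero, so they form a
basis of `ℝ⁴`. But `⟪N c v, P v⟫ = ⟪v, N c P v⟫ = 0` for every `c`, so `P v = 0`, which contradicts
`P * P = 1`.
-/

open Matrix

theorem mul_mul_cancel_of_mul_self {M : Type*} [Monoid M] {x : M} (h : x * x = 1) (z : M) :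
    x * (x * z) = z := by
  rw [← mul_assoc, h, one_mul]

section Ring

variable {R : Type*} [Ring R]

theorem mul_mul_swap_of_anticomm {x y : R} (h : x * y = -(y * x)) (z : R) :
    x * (y * z) = -(y * (x * z)) := by
  rw [← mul_assoc, h, neg_mul, mul_assoc]

variable {N : Fin 4 → R}

-- The simp set below sorts every word in the `N i` increasingly, collecting the signs.
theorem prod_reverse_of_anticomm (hanti : ∀ i j, i ≠ j → N i * N j = -(N j * N i)) :
    N 3 * (N 2 * (N 1 * N 0)) = N 0 * N 1 * N 2 * N 3 := by
  have h := fun i j (hji : j < i) => hanti i j hji.ne'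
  simp (disch := decide) only [mul_assoc, h,
    fun i j (hji : j < i) => mul_mul_swap_of_anticomm (h i j hji), neg_neg, mul_neg]

theorem mul_prod_of_anticomm (hanti : ∀ i j, i ≠ j → N i * N j = -(N j * N i)) (c : Fin 4) :
    N c * (N 0 * N 1 * N 2 * N 3) = -(N 0 * N 1 * N 2 * N 3 * N c) := by
  have h := fun i j (hji : j < i) => hanti i j hji.ne'
  fin_cases c <;>
  simp (disch := decide) only [Fin.zero_eta, Fin.mk_one, Fin.reduceFinMk, mul_assoc, h,
    fun i j (hji : j < i) => mul_mul_swap_of_anticomm (h i j hji), neg_neg, mul_neg]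

theorem prod_reverse_mul_prod_of_mul_self (hinv : ∀ i, N i * N i = 1) :
    N 3 * (N 2 * (N 1 * N 0)) * (N 0 * N 1 * N 2 * N 3) = 1 := by
  simp only [mul_assoc, fun i => mul_mul_cancel_of_mul_self (hinv i), hinv]

end Ring

section DotProduct

variable {n : Type*} [Fintype n]

theorem mulVec_dotProduct_mulVec {R : Type*} [CommSemiring R] (A C : Matrix n n R)
    (x y : n → R) : (A *ᵥ x) ⬝ᵥ (C *ᵥ y) = x ⬝ᵥ (Aᵀ * C) *ᵥ y := by
  rw [dotProduct_mulVec, dotProduct_mulVec, vecMul_mulVec, ← mulVec_transpose]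

theorem dotProduct_mulVec_self_eq_zero_of_transpose_eq_neg {R : Type*} [CommRing R]
    [NoZeroDivisors R] [CharZero R] {S : Matrix n n R} (hS : Sᵀ = -S) (v : n → R) :
    v ⬝ᵥ S *ᵥ v = 0 := by
  rw [← CharZero.eq_neg_self_iff]
  conv_lhs => rw [dotProduct_mulVec, ← mulVec_transpose, hS, dotProduct_comm]
  rw [neg_mulVec, dotProduct_neg]

theorem eq_zero_of_forall_dotProduct_eq_zero_of_pairwise {K : Type*} [Field K] [DecidableEq n]
    {b : n → n → K} (horth : Pairwise fun i j => b i ⬝ᵥ b j = 0) (hb : ∀ i, b i ⬝ᵥ b i ≠ 0)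
    {u : n → K} (hu : ∀ i, b i ⬝ᵥ u = 0) : u = 0 := by
  have hgram : of b * (of b)ᵀ = diagonal fun i => b i ⬝ᵥ b i := by
    ext i j
    rcases eq_or_ne i j with rfl | hij
    · simp [mul_apply, dotProduct]
    · simpa [mul_apply, dotProduct, hij] using horth hij
  have hdet : (of b).det ≠ 0 := by
    intro h
    have := congrArg det hgram
    rw [det_mul, h, zero_mul, det_diagonal] at this
    exact Finset.prod_ne_zero_iff.mpr (fun i _ => hb i) this.symm
  refine mulVec_injective_of_det_ne_zero hdet ?_
  ext i
  simpa [mulVec, dotProduct] using hu i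

end DotProduct

/-- There do not exist four real symmetric `4 × 4` matrices that are pairwise
anticommuting involutions. -/
theorem stmt_5 :
    ¬ ∃ N : Fin 4 → Matrix (Fin 4) (Fin 4) ℝ,
      (∀ i, (N i)ᵀ = N i) ∧
      (∀ i, N i * N i = 1) ∧
      (∀ i j, i ≠ j → N i * N j = - (N j * N i)) := by
  rintro ⟨N, hsym, hinv, hanti⟩
  set P := N 0 * N 1 * N 2 * N 3
  have hPsym : Pᵀ = P := by
    simpa only [P, transpose_mul, hsym] using prod_reverse_of_anticomm hanti
  have hPP : P * P = 1 := by
    nth_rewrite 1 [← hPsym]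
    simpa only [P, transpose_mul, hsym] using prod_reverse_mul_prod_of_mul_self hinv
  have hself_adj : ∀ i (X : Matrix (Fin 4) (Fin 4) ℝ) v,
      (N i *ᵥ v) ⬝ᵥ (X *ᵥ v) = v ⬝ᵥ (N i * X) *ᵥ v :=
    fun i X v => by rw [mulVec_dotProduct_mulVec, hsym]
  set v : Fin 4 → ℝ := Pi.single 0 1
  have hPv : P *ᵥ v = 0 := by
    refine eq_zero_of_forall_dotProduct_eq_zero_of_pairwise (b := fun c => N c *ᵥ v)
      (fun i j hij => ?_) (fun i => ?_) (fun c => ?_)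
    · beta_reduce
      rw [hself_adj]
      refine dotProduct_mulVec_self_eq_zero_of_transpose_eq_neg ?_ v
      rw [transpose_mul, hsym, hsym, hanti j i hij.symm]
    · rw [hself_adj, hinv, one_mulVec]
      simp [v]
    · rw [hself_adj]
      refine dotProduct_mulVec_self_eq_zero_of_transpose_eq_neg ?_ v
      rw [transpose_mul, hsym, hPsym, mul_prod_of_anticomm hanti c, neg_neg]
  have hv : v = 0 := by rw [← one_mulVec v, ← hPP, ← mulVec_mulVec, hPv, mulVec_zero]
  simpa [v] using congrFun hv 0
end

section
/- Let n ≥ 1, m ≥ 1, and let Y_1, …, Y_m be n×n complex matrices, each symmetric (Y_αᵀ = Y_α), satisfying the Clifford-type Yukawa relations Y_α* Y_β + Y_β* Y_α = 2 δ_{αβ} I_n for all α, β. If n = 2 then m ≤ 3, and if n = 4 then m ≤ 4. (These are the only two admissible options, (n_ω = 2, m_ω = 3) and (n_ω = 4, m_ω = 4), for the fermionic and bosonic dimensions of an irreducible component of the Yukawa finiteness condition with Clifford-type couplings in these dimensions.) -/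
/-!
Fix `Y₀ = Y α₀` and put `C β = Y₀ᴴ * Y β` for `β ≠ α₀`. The Yukawa relations make the `C β`
anticommuting square roots of `-1`, and symmetry of the `Y α` gives `(C β)ᵀ = Y₀ * C β * Y₀ᴴ`.
Hence for a product `C_S` of distinct `C β`'s, `(Y₀ * C_S)ᵀ = ± Y₀ * C_S` with sign
`(-1) ^ (|S| choose 2)`, so `Y₀ * C_S` is skew-symmetric when `|S| ≡ 2, 3 mod 4`. Conjugation by
each `C k` multiplies `C_S` by a sign, and products with different sign patterns are
trace-orthogonal, hence linearly independent. Skew-symmetric `n × n` matrices form a space of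
dimension `n choose 2`: this is `1` for `n = 2`, whereas four couplings give the two matrices
`Y₀ C₁ C₂, Y₀ C₁ C₃`; and it is `6` for `n = 4`, whereas five couplings give the seven matrices
`Y₀ C_i C_j` and `Y₀ C₁ C₂ C₃`.
-/

open Matrix

section Clifford

variable {A : Type*} [Ring A] {ι : Type*} {C : ι → A}

theorem prod_map_mul_prod_map_reverse (hsq : ∀ i, C i * C i = -1) (l : List ι) :
    (l.map C).prod * (l.reverse.map C).prod = (-1) ^ l.length := by
  induction l with
  | nil => simp
  | cons a l ih =>
    have hcomm := (Commute.neg_one_left (C a)).pow_left l.length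
    simp only [List.map_cons, List.prod_cons, List.reverse_cons, List.map_append, List.prod_append,
      List.map_nil, List.prod_nil, mul_one, List.length_cons]
    rw [mul_assoc, ← mul_assoc (l.map C).prod, ih, ← mul_assoc, ← hcomm.eq, mul_assoc, hsq,
      pow_succ]

variable [DecidableEq ι]

theorem mul_prod_map_eq_neg_one_pow_mul (hanti : ∀ i j, i ≠ j → C i * C j = -(C j * C i))
    (k : ι) (l : List ι) :
    C k * (l.map C).prod = (-1) ^ l.countP (· ≠ k) * ((l.map C).prod * C k) := by
  induction l with
  | nil => simp
  | cons a l ih =>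
    have hcomm := (Commute.neg_one_left (C a)).pow_left (l.countP (· ≠ k))
    rw [List.map_cons, List.prod_cons]
    by_cases hak : a = k
    · subst hak
      conv_lhs => rw [ih, ← mul_assoc, ← hcomm.eq, mul_assoc]
      simp [mul_assoc]
    · rw [← mul_assoc, hanti k a (Ne.symm hak), neg_mul, mul_assoc, ih, ← mul_assoc (C a),
        ← hcomm.eq]
      simp [hak, pow_succ, mul_assoc]

theorem mul_prod_map_mul_prod_map_eq_neg (hanti : ∀ i j, i ≠ j → C i * C j = -(C j * C i))
    {k : ι} {l l' : List ι} (hodd : Odd (l.countP (· ≠ k) + l'.countP (· ≠ k))) :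
    C k * ((l.map C).prod * (l'.map C).prod) = -((l.map C).prod * (l'.map C).prod * C k) := by
  have hcomm := (Commute.neg_one_left (l.map C).prod).pow_left (l'.countP (· ≠ k))
  rw [← mul_assoc, mul_prod_map_eq_neg_one_pow_mul hanti, mul_assoc, mul_assoc,
    mul_prod_map_eq_neg_one_pow_mul hanti, ← mul_assoc _ ((-1) ^ _), ← hcomm.eq]
  simp only [← mul_assoc, ← pow_add, hodd.neg_one_pow]
  simp [mul_assoc]

theorem prod_map_reverse_of_nodup (hanti : ∀ i j, i ≠ j → C i * C j = -(C j * C i))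
    {l : List ι} (hl : l.Nodup) :
    (l.reverse.map C).prod = (-1) ^ l.length.choose 2 * (l.map C).prod := by
  induction l with
  | nil => simp
  | cons a l ih =>
    obtain ⟨ha, hl⟩ := List.nodup_cons.mp hl
    have hcount : l.countP (· ≠ a) = l.length :=
      List.countP_eq_length.mpr fun b hb => by simpa using ne_of_mem_of_not_mem hb ha
    have hswap : (l.map C).prod * C a = (-1) ^ l.length * (C a * (l.map C).prod) := by
      rw [mul_prod_map_eq_neg_one_pow_mul hanti, hcount, ← mul_assoc, ← pow_add, ← two_mul,
        pow_mul]
      simp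
    simp only [List.reverse_cons, List.map_append, List.prod_append, List.map_cons,
      List.map_nil, List.prod_cons, List.prod_nil, mul_one, List.length_cons]
    rw [ih hl, mul_assoc, hswap, ← mul_assoc, ← pow_add, Nat.choose_succ_succ',
      Nat.choose_one_right, add_comm l.length]

end Clifford

namespace Matrix

theorem eq_zero_of_transpose_eq_neg {K : Type*} [Field K] [NeZero (2 : K)] {n : Type*}
    [LinearOrder n] {M : Matrix n n K} (hM : Mᵀ = -M) (hupper : ∀ i j, i < j → M i j = 0) :
    M = 0 := by
  have hswap : ∀ i j, M j i = -M i j := fun i j => congrFun (congrFun hM i) j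
  ext i j
  rcases lt_trichotomy i j with h | rfl | h
  · exact hupper i j h
  · have h2 : (2 : K) * M i i = 0 := by linear_combination hswap i i
    exact (mul_eq_zero.mp h2).resolve_left two_ne_zero
  · rw [hswap, hupper j i h, neg_zero, zero_apply]

variable {K : Type*} [Field K] {n : Type*} [Fintype n]

theorem card_le_choose_two_of_linearIndependent [NeZero (2 : K)] {ι : Type*} [Fintype ι]
    {v : ι → Matrix n n K} (hv : LinearIndependent K v) (hskew : ∀ i, (v i)ᵀ = -v i) :
    Fintype.card ι ≤ (Fintype.card n).choose 2 := by
  let _ : LinearOrder n := LinearOrder.lift' _ (Fintype.equivFin n).injective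
  let upper : Matrix n n K →ₗ[K] ({p : n × n // p.1 < p.2} → K) :=
    { toFun := fun M p => M p.1.1 p.1.2
      map_add' := fun _ _ => rfl
      map_smul' := fun _ _ => rfl }
  have hdisj : Disjoint (Submodule.span K (Set.range v)) (LinearMap.ker upper) := by
    rw [Submodule.disjoint_def]
    intro M hM hker
    obtain ⟨c, rfl⟩ := (Submodule.mem_span_range_iff_exists_fun K).mp hM
    refine eq_zero_of_transpose_eq_neg ?_ fun i j hij => congrFun hker ⟨(i, j), hij⟩
    simp [transpose_sum, hskew]
  have := (hv.map hdisj).fintype_card_le_finrank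
  rwa [Module.finrank_fintype_fun_eq_card, Fintype.card_subtype,
    Fintype.card_product_filter_lt] at this

theorem linearIndependent_of_trace_mul {ι : Type*} [Fintype ι] [DecidableEq ι]
    (v w : ι → Matrix n n K) (hoff : ∀ i j, i ≠ j → trace (v i * w j) = 0)
    (hdiag : ∀ i, trace (v i * w i) ≠ 0) : LinearIndependent K v := by
  rw [Fintype.linearIndependent_iff]
  intro g hg j
  have h := congrArg (fun M => trace (M * w j)) hg
  simp only [Finset.sum_mul, smul_mul_assoc, trace_sum, trace_smul, smul_eq_mul, zero_mul,
    trace_zero] at h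
  rw [Finset.sum_eq_single j (fun i _ hij => by rw [hoff i j hij, mul_zero])
    (fun hj => absurd (Finset.mem_univ j) hj)] at h
  exact (mul_eq_zero.mp h).resolve_right (hdiag j)

variable [DecidableEq n]

theorem trace_eq_zero_of_mul_eq_neg_mul [NeZero (2 : K)] {C M : Matrix n n K} (hC : IsUnit C)
    (h : C * M = -(M * C)) : trace M = 0 := by
  have hdet := (isUnit_iff_isUnit_det C).mp hC
  have htr : trace M = -trace M := calc
    trace M = trace (C⁻¹ * (C * M)) := by rw [← mul_assoc, nonsing_inv_mul _ hdet, one_mul]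
    _ = -trace (M * C * C⁻¹) := by rw [h, mul_neg, trace_neg, trace_mul_comm]
    _ = -trace M := by rw [mul_assoc, mul_nonsing_inv _ hdet, mul_one]
  have h2 : (2 : K) * trace M = 0 := by linear_combination htr
  exact (mul_eq_zero.mp h2).resolve_left two_ne_zero

theorem transpose_prod_map_mul {κ : Type*} {C : κ → Matrix n n K} {Y U : Matrix n n K}
    (hUY : U * Y = 1) (hCt : ∀ i, (C i)ᵀ = Y * C i * U) (l : List κ) :
    (l.map C).prodᵀ * Y = Y * (l.reverse.map C).prod := by
  induction l with
  | nil => simp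
  | cons a l ih =>
    simp only [List.map_cons, List.prod_cons, transpose_mul, List.reverse_cons, List.map_append,
      List.map_nil, List.prod_append, List.prod_nil, mul_one, hCt]
    rw [mul_assoc, mul_assoc, hUY, mul_one, ← mul_assoc, ih, mul_assoc]

/-- `(L i).countP (· ≠ k)` is the parity of the sign by which conjugation by `C k` acts on the
product along `L i`, and `(L i).length.choose 2` that of its reversal. -/
theorem card_le_choose_two_of_clifford [CharZero K] [Nonempty n] {κ : Type*} [DecidableEq κ]
    {C : κ → Matrix n n K} (hsq : ∀ i, C i * C i = -1)
    (hanti : ∀ i j, i ≠ j → C i * C j = -(C j * C i)) {Y U : Matrix n n K} (hUY : U * Y = 1)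
    (hYt : Yᵀ = Y) (hCt : ∀ i, (C i)ᵀ = Y * C i * U) {ι : Type*} [Fintype ι] [DecidableEq ι]
    (L : ι → List κ) (hnodup : ∀ i, (L i).Nodup) (hodd : ∀ i, Odd ((L i).length.choose 2))
    (hsep : Pairwise fun i j => ∃ k, Odd ((L i).countP (· ≠ k) + (L j).countP (· ≠ k))) :
    Fintype.card ι ≤ (Fintype.card n).choose 2 := by
  set P : List κ → Matrix n n K := fun l => (l.map C).prod
  have htrace : ∀ i j, trace (Y * P (L i) * (P (L j).reverse * U)) =
      trace (P (L i) * P (L j).reverse) := fun i j => by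
    rw [trace_mul_cycle, mul_assoc _ U, hUY, mul_one, trace_mul_comm]
  refine card_le_choose_two_of_linearIndependent (v := fun i => Y * P (L i)) ?_ fun i => ?_
  · refine linearIndependent_of_trace_mul _ (fun j => P (L j).reverse * U) (fun i j hij => ?_)
      fun i => ?_
    · obtain ⟨k, hk⟩ := hsep hij
      rw [htrace]
      refine trace_eq_zero_of_mul_eq_neg_mul (C := C k) (IsUnit.of_mul_eq_one (-C k) ?_) ?_
      · rw [mul_neg, hsq, neg_neg]
      · exact mul_prod_map_mul_prod_map_eq_neg hanti (by rwa [List.countP_reverse])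
    · rw [htrace]
      simp only [P, prod_map_mul_prod_map_reverse hsq]
      rcases neg_one_pow_eq_or (Matrix n n K) (L i).length with h | h <;> simp [h]
  · simp only [transpose_mul, hYt, transpose_prod_map_mul hUY hCt, P,
      prod_map_reverse_of_nodup hanti (hnodup i), (hodd i).neg_one_pow, neg_one_mul, mul_neg]

variable [Star K] {ι : Type*} [DecidableEq ι]

def IsCliffordYukawa (Y : ι → Matrix n n K) : Prop :=
  ∀ α β, (Y α)ᴴ * Y β + (Y β)ᴴ * Y α = if α = β then (2 : K) • (1 : Matrix n n K) else 0

namespace IsCliffordYukawa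

variable {Y : ι → Matrix n n K}

theorem conjTranspose_mul_self [NeZero (2 : K)] (hY : IsCliffordYukawa Y) (α : ι) :
    (Y α)ᴴ * Y α = 1 := by
  have h := hY α α
  rw [if_pos rfl, ← two_smul K] at h
  exact smul_right_injective _ two_ne_zero h

theorem conjTranspose_mul_of_ne (hY : IsCliffordYukawa Y) {α β : ι} (h : α ≠ β) :
    (Y α)ᴴ * Y β = -((Y β)ᴴ * Y α) := by
  have hαβ := hY α β
  rw [if_neg h] at hαβ
  exact eq_neg_of_add_eq_zero_left hαβ

theorem card_le_choose_two [CharZero K] [Nonempty n] (hY : IsCliffordYukawa Y)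
    (hsym : ∀ α, (Y α)ᵀ = Y α) {k : ℕ} {f : Fin (k + 1) → ι} (hf : Function.Injective f)
    {ι' : Type*} [Fintype ι'] [DecidableEq ι'] (L : ι' → List (Fin k))
    (hnodup : ∀ i, (L i).Nodup) (hodd : ∀ i, Odd ((L i).length.choose 2))
    (hsep : Pairwise fun i j => ∃ k, Odd ((L i).countP (· ≠ k) + (L j).countP (· ≠ k))) :
    Fintype.card ι' ≤ (Fintype.card n).choose 2 := by
  have hunit := hY.conjTranspose_mul_self
  have hunit' : ∀ α, Y α * (Y α)ᴴ = 1 := fun α => mul_eq_one_comm.mp (hunit α)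
  have hmul : ∀ i j : Fin k, (Y (f 0))ᴴ * Y (f i.succ) * ((Y (f 0))ᴴ * Y (f j.succ)) =
      -((Y (f i.succ))ᴴ * Y (f j.succ)) := fun i j => by
    rw [hY.conjTranspose_mul_of_ne (hf.ne (Fin.succ_ne_zero i).symm), neg_mul, mul_assoc,
      ← mul_assoc (Y (f 0)), hunit', one_mul]
  refine card_le_choose_two_of_clifford (C := fun i => (Y (f 0))ᴴ * Y (f i.succ))
    (fun i => by rw [hmul, hunit]) (fun i j hij => ?_) (hunit (f 0)) (hsym (f 0)) (fun i => ?_)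
    L hnodup hodd hsep
  · rw [hmul, hmul, hY.conjTranspose_mul_of_ne (hf.ne ((Fin.succ_injective _).ne hij))]
  · rw [transpose_mul, hsym, ← conjTranspose_transpose_eq_transpose_conjTranspose, hsym,
      ← mul_assoc, hunit', one_mul]

end IsCliffordYukawa

end Matrix

theorem stmt_6_general (n m : ℕ)
    (Y : Fin m → Matrix (Fin n) (Fin n) ℂ)
    (hsym : ∀ α, (Y α)ᵀ = Y α)
    (hcliff : ∀ α β, (Y α)ᴴ * Y β + (Y β)ᴴ * Y α =
      if α = β then (2 : ℂ) • (1 : Matrix (Fin n) (Fin n) ℂ) else 0) :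
    (n = 2 → m ≤ 3) ∧ (n = 4 → m ≤ 4) := by
  have hY : IsCliffordYukawa Y := hcliff
  refine ⟨fun hn => ?_, fun hn => ?_⟩ <;> subst hn <;> by_contra! hm
  · have := hY.card_le_choose_two hsym (Fin.castLE_injective hm)
      ![[0, 1], [0, 2]] (by decide) (by decide) (by unfold Pairwise; decide)
    simp at this
  · have := hY.card_le_choose_two hsym (Fin.castLE_injective hm)
      ![[0, 1], [0, 2], [0, 3], [1, 2], [1, 3], [2, 3], [0, 1, 2]] (by decide) (by decide)
      (by unfold Pairwise; decide)
    simp [Nat.choose] at this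

/-- For symmetric Clifford-type Yukawa couplings: if `n = 2` then `m ≤ 3`,
and if `n = 4` then `m ≤ 4`. -/
theorem stmt_6 (n m : ℕ) (hn : 1 ≤ n) (hm : 1 ≤ m)
    (Y : Fin m → Matrix (Fin n) (Fin n) ℂ)
    (hsym : ∀ α, (Y α)ᵀ = Y α)
    (hcliff : ∀ α β, (Y α)ᴴ * Y β + (Y β)ᴴ * Y α =
      if α = β then (2 : ℂ) • (1 : Matrix (Fin n) (Fin n) ℂ) else 0) :
    (n = 2 → m ≤ 3) ∧ (n = 4 → m ≤ 4) :=
  stmt_6_general n m Y hsym hcliff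
end

section
/- Let n ≥ 1, m ≥ 1, and let Y_1, …, Y_m be n×n complex matrices, each symmetric (Y_αᵀ = Y_α), satisfying the Clifford-type Yukawa relations Y_α* Y_β + Y_β* Y_α = 2 δ_{αβ} I_n for all α, β. Then n is divisible by 2^⌊(m−1)/2⌋. -/
/-!
The matrices `G α = Y₀ᴴ Y_α` (`α ≠ 0`) square to `-1` and pairwise anticommute: transposing the
Yukawa relations via `Y_αᵀ = Y_α` gives `Y_α Y₀ᴴ = -Y₀ Y_αᴴ`, whence `G_α G_β = -Y_αᴴ Y_β`.
So `ℂⁿ` carries `m - 1` anticommuting complex structures. Pairing them into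
`P_j = i G_{2j} G_{2j+1}` yields `⌊(m-1)/2⌋` commuting involutions, and
`E = ∏_j (1 + P_j)/2` is an idempotent whose trace is `n / 2^⌊(m-1)/2⌋`: each factor halves
the trace, because `tr (E' P_j) = 0` when `G_{2j}` commutes with `E'` but anticommutes with
`P_j`. The trace of an idempotent is its rank, a natural number.
-/

open Matrix

def AntiCommute {R : Type*} [Mul R] [Neg R] (a b : R) : Prop := a * b = -(b * a)

namespace AntiCommute

variable {R : Type*} [Ring R] {a b c : R}

theorem symm (h : AntiCommute a b) : AntiCommute b a := by
  rw [AntiCommute, h, neg_neg]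

theorem commute_mul_right (hb : AntiCommute a b) (hc : AntiCommute a c) :
    Commute a (b * c) := by
  rw [Commute, SemiconjBy, ← mul_assoc, hb, neg_mul, mul_assoc, hc, mul_neg, neg_neg, mul_assoc]

theorem mul_right_of_commute (hb : Commute a b) (hc : AntiCommute a c) :
    AntiCommute a (b * c) := by
  rw [AntiCommute, ← mul_assoc, hb.eq, mul_assoc, hc, mul_neg, mul_assoc]

theorem smul_right {K : Type*} [CommSemiring K] [Algebra K R] (h : AntiCommute a b) (r : K) :
    AntiCommute a (r • b) := by
  rw [AntiCommute, mul_smul_comm, h, smul_mul_assoc, smul_neg]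

theorem mul_mul_self_eq_neg_one (h : AntiCommute a b) (ha : a * a = -1) (hb : b * b = -1) :
    a * b * (a * b) = -1 := by
  rw [mul_assoc, ← mul_assoc b, h.symm, neg_mul, mul_neg, ← mul_assoc, ← mul_assoc, ha,
    neg_one_mul, neg_mul, hb, neg_neg]

end AntiCommute

theorem isIdempotentElem_inv_two_smul_one_add {K R : Type*} [Field K] [CharZero K] [Ring R]
    [Algebra K R] {a : R} (h : a * a = 1) : IsIdempotentElem ((2⁻¹ : K) • (1 + a)) := by
  rw [IsIdempotentElem, smul_mul_smul, add_mul, one_mul, mul_add, mul_one, h]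
  module

theorem Matrix.trace_eq_finrank_range_of_isIdempotentElem {ι K : Type*} [Fintype ι]
    [DecidableEq ι] [Field K] {E : Matrix ι ι K} (hE : IsIdempotentElem E) :
    E.trace = (Module.finrank K (LinearMap.range (Matrix.toLin' E)) : K) := by
  have h : IsIdempotentElem (Matrix.toLin' E) := hE.map Matrix.toLinAlgEquiv'
  rw [← Matrix.trace_toLin'_eq, (LinearMap.IsIdempotentElem.isProj_range _ h).trace]

theorem Matrix.trace_eq_zero_of_isUnit_of_antiCommute {ι R : Type*} [Fintype ι] [DecidableEq ι]
    [CommRing R] [NoZeroDivisors R] [CharZero R] {g M : Matrix ι ι R} (hg : IsUnit g)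
    (h : AntiCommute g M) : M.trace = 0 := by
  obtain ⟨u, rfl⟩ := hg
  have hconj : M = -((↑u⁻¹ : Matrix ι ι R) * (M * u)) := by
    rw [← mul_neg, ← h, ← mul_assoc, Units.inv_mul, one_mul]
  have : M.trace = -M.trace := by
    conv_lhs => rw [hconj]
    rw [trace_neg, trace_mul_comm, mul_assoc, Units.mul_inv, mul_one]
  exact add_self_eq_zero.mp (by linear_combination this)

section CommonFixedProjection

variable {ι K : Type*} [Fintype ι] [DecidableEq ι] [Field K]
  (P : ℕ → Matrix ι ι K)

/-- For commuting involutions `P j`, the projection onto their common `+1`-eigenspace. -/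
noncomputable def fixProj : ℕ → Matrix ι ι K
  | 0 => 1
  | s + 1 => fixProj s * (2⁻¹ : K) • (1 + P s)

variable {P}

theorem commute_fixProj {x : Matrix ι ι K} {s : ℕ} (hx : ∀ j < s, Commute x (P j)) :
    Commute x (fixProj P s) := by
  induction s with
  | zero => exact Commute.one_right x
  | succ s ih =>
    exact (ih fun j hj => hx j (by omega)).mul_right
      (((Commute.one_right x).add_right (hx s (by omega))).smul_right _)

theorem isIdempotentElem_fixProj [CharZero K] {s : ℕ} (hsq : ∀ j < s, P j * P j = 1)
    (hcomm : ∀ j < s, ∀ k < s, Commute (P j) (P k)) : IsIdempotentElem (fixProj P s) := by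
  induction s with
  | zero => exact IsIdempotentElem.one
  | succ s ih =>
    have hP : Commute ((2⁻¹ : K) • (1 + P s)) (fixProj P s) :=
      commute_fixProj fun j hj =>
        ((Commute.one_left _).add_left (hcomm s (by omega) j (by omega))).smul_left _
    exact IsIdempotentElem.mul_of_commute hP.symm
      (ih (fun j hj => hsq j (by omega)) fun j hj k hk => hcomm j (by omega) k (by omega))
      (isIdempotentElem_inv_two_smul_one_add (hsq s (by omega)))

theorem trace_fixProj_mul_two_pow [CharZero K] {s : ℕ}
    (hpartner : ∀ j < s, ∃ g, IsUnit g ∧ AntiCommute g (P j) ∧ ∀ i < j, Commute g (P i)) :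
    (fixProj P s).trace * 2 ^ s = Fintype.card ι := by
  induction s with
  | zero => simp [fixProj]
  | succ s ih =>
    obtain ⟨g, hg, hanti, hcomm⟩ := hpartner s (by omega)
    have hzero : (fixProj P s * P s).trace = 0 :=
      trace_eq_zero_of_isUnit_of_antiCommute hg
        (AntiCommute.mul_right_of_commute (commute_fixProj hcomm) hanti)
    rw [← ih fun j hj => hpartner j (by omega), fixProj, mul_smul_comm, trace_smul, mul_add,
      mul_one, trace_add, hzero, add_zero, smul_eq_mul, pow_succ]
    ring

theorem two_pow_dvd_card_of_commuting_involutions [CharZero K] {t : ℕ}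
    (hsq : ∀ j < t, P j * P j = 1)
    (hcomm : ∀ j < t, ∀ k < t, Commute (P j) (P k))
    (hpartner : ∀ j < t, ∃ g, IsUnit g ∧ AntiCommute g (P j) ∧ ∀ i < j, Commute g (P i)) :
    2 ^ t ∣ Fintype.card ι := by
  have h := trace_fixProj_mul_two_pow hpartner
  rw [trace_eq_finrank_range_of_isIdempotentElem (isIdempotentElem_fixProj hsq hcomm)] at h
  exact ⟨_, by exact_mod_cast (h.symm.trans (mul_comm _ _))⟩

end CommonFixedProjection

theorem two_pow_dvd_card_of_clifford {ι : Type*} [Fintype ι] [DecidableEq ι] {k : ℕ}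
    (G : Fin k → Matrix ι ι ℂ) (hsq : ∀ j, G j * G j = -1)
    (hanti : Pairwise fun i j => AntiCommute (G i) (G j)) :
    2 ^ (k / 2) ∣ Fintype.card ι := by
  set G' : ℕ → Matrix ι ι ℂ := fun j => if h : j < k then G ⟨j, h⟩ else 0
  have hsq' : ∀ j < k, G' j * G' j = -1 := fun j hj => by simp only [G', dif_pos hj, hsq]
  have hanti' : ∀ i < k, ∀ j < k, i ≠ j → AntiCommute (G' i) (G' j) := fun i hi j hj hij => by
    simp only [G', dif_pos hi, dif_pos hj]
    exact hanti (by simpa [Fin.ext_iff] using hij)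
  -- `i • G (2j) G (2j+1)`, `j < k / 2`, are commuting involutions, and `G (2j)` anticommutes
  -- with the `j`-th one while commuting with the earlier ones.
  apply two_pow_dvd_card_of_commuting_involutions
    (P := fun j => Complex.I • (G' (2 * j) * G' (2 * j + 1)))
  · intro j hj
    rw [smul_mul_smul, Complex.I_mul_I,
      (hanti' _ (by omega) _ (by omega) (by omega)).mul_mul_self_eq_neg_one (hsq' _ (by omega))
        (hsq' _ (by omega)), neg_one_smul, neg_neg]
  · intro j hj l hl
    obtain rfl | hjl := eq_or_ne j l
    · exact Commute.refl _
    refine (Commute.mul_left ?_ ?_).smul_left _ |>.smul_right _ <;>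
      exact AntiCommute.commute_mul_right (hanti' _ (by omega) _ (by omega) (by omega))
        (hanti' _ (by omega) _ (by omega) (by omega))
  · intro j hj
    refine ⟨G' (2 * j), IsUnit.of_mul_eq_one (-G' (2 * j)) ?_, ?_, fun i hi => ?_⟩
    · rw [mul_neg, hsq' _ (by omega), neg_neg]
    · exact (AntiCommute.mul_right_of_commute (Commute.refl _)
        (hanti' _ (by omega) _ (by omega) (by omega))).smul_right _
    · exact (AntiCommute.commute_mul_right (hanti' _ (by omega) _ (by omega) (by omega))
        (hanti' _ (by omega) _ (by omega) (by omega))).smul_right _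

theorem Matrix.transpose_conjTranspose_mul_of_isSymm {ι α : Type*} [Fintype ι] [CommSemiring α]
    [Star α] {A B : Matrix ι ι α} (hA : A.IsSymm) (hB : B.IsSymm) : (Aᴴ * B)ᵀ = B * Aᴴ := by
  rw [transpose_mul, hB.eq, ← conjTranspose_transpose_eq_transpose_conjTranspose, hA.eq]

theorem mul_mul_eq_neg_of_mul_eq_neg {R : Type*} [Ring R] {a a' b b' c : R} (ha : a' * a = 1)
    (hb : b * a' = -(a * b')) : a' * b * (a' * c) = -(b' * c) := by
  rw [mul_assoc, ← mul_assoc b, hb, neg_mul, mul_neg, ← mul_assoc, ← mul_assoc, ha, one_mul]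

section Yukawa

variable {κ ι : Type*} [DecidableEq κ] [Fintype ι] [DecidableEq ι] {Y : κ → Matrix ι ι ℂ}
  (hcliff : ∀ α β, (Y α)ᴴ * Y β + (Y β)ᴴ * Y α =
      if α = β then (2 : ℂ) • (1 : Matrix ι ι ℂ) else 0)
include hcliff

theorem conjTranspose_mul_self_eq_one_of_yukawa (α : κ) : (Y α)ᴴ * Y α = 1 := by
  have h := hcliff α α
  rw [if_pos rfl, ← two_smul ℂ] at h
  exact smul_right_injective _ two_ne_zero h

theorem mul_conjTranspose_eq_neg_of_yukawa (hsym : ∀ α, (Y α)ᵀ = Y α) {α β : κ} (hαβ : α ≠ β) :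
    Y α * (Y β)ᴴ = -(Y β * (Y α)ᴴ) := by
  have h := congrArg transpose (hcliff β α)
  rw [transpose_add, transpose_conjTranspose_mul_of_isSymm (hsym β) (hsym α),
    transpose_conjTranspose_mul_of_isSymm (hsym α) (hsym β), if_neg hαβ.symm,
    transpose_zero] at h
  exact eq_neg_of_add_eq_zero_left h

variable (hsym : ∀ α, (Y α)ᵀ = Y α) {α₀ α β : κ}
include hsym

theorem conjTranspose_mul_mul_conjTranspose_mul_of_yukawa (hα : α ≠ α₀) :
    (Y α₀)ᴴ * Y α * ((Y α₀)ᴴ * Y β) = -((Y α)ᴴ * Y β) :=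
  mul_mul_eq_neg_of_mul_eq_neg (conjTranspose_mul_self_eq_one_of_yukawa hcliff α₀)
    (mul_conjTranspose_eq_neg_of_yukawa hcliff hsym hα)

theorem conjTranspose_mul_mul_self_eq_neg_one_of_yukawa (hα : α ≠ α₀) :
    (Y α₀)ᴴ * Y α * ((Y α₀)ᴴ * Y α) = -1 := by
  rw [conjTranspose_mul_mul_conjTranspose_mul_of_yukawa hcliff hsym hα,
    conjTranspose_mul_self_eq_one_of_yukawa hcliff]

theorem antiCommute_conjTranspose_mul_of_yukawa (hα : α ≠ α₀) (hβ : β ≠ α₀) (hαβ : α ≠ β) :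
    AntiCommute ((Y α₀)ᴴ * Y α) ((Y α₀)ᴴ * Y β) := by
  have h := hcliff α β
  rw [if_neg hαβ] at h
  rw [AntiCommute, conjTranspose_mul_mul_conjTranspose_mul_of_yukawa hcliff hsym hα,
    conjTranspose_mul_mul_conjTranspose_mul_of_yukawa hcliff hsym hβ,
    eq_neg_of_add_eq_zero_left h]

end Yukawa

theorem stmt_7_general (n m : ℕ)
    (Y : Fin m → Matrix (Fin n) (Fin n) ℂ)
    (hsym : ∀ α, (Y α)ᵀ = Y α)
    (hcliff : ∀ α β, (Y α)ᴴ * Y β + (Y β)ᴴ * Y α =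
      if α = β then (2 : ℂ) • (1 : Matrix (Fin n) (Fin n) ℂ) else 0) :
    2 ^ ((m - 1) / 2) ∣ n := by
  rcases m with _ | k
  · simp
  simpa using two_pow_dvd_card_of_clifford (fun j : Fin k => (Y 0)ᴴ * Y j.succ)
    (fun j => conjTranspose_mul_mul_self_eq_neg_one_of_yukawa hcliff hsym (Fin.succ_ne_zero j))
    (fun i j hij => antiCommute_conjTranspose_mul_of_yukawa hcliff hsym (Fin.succ_ne_zero i)
      (Fin.succ_ne_zero j) (Fin.succ_injective _ |>.ne hij))

/-- For symmetric Clifford-type Yukawa couplings `Y₁, …, Y_m` on `ℂ^n`,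
`n` is divisible by `2 ^ ⌊(m-1)/2⌋`. -/
theorem stmt_7 (n m : ℕ) (hn : 1 ≤ n) (hm : 1 ≤ m)
    (Y : Fin m → Matrix (Fin n) (Fin n) ℂ)
    (hsym : ∀ α, (Y α)ᵀ = Y α)
    (hcliff : ∀ α β, (Y α)ᴴ * Y β + (Y β)ᴴ * Y α =
      if α = β then (2 : ℂ) • (1 : Matrix (Fin n) (Fin n) ℂ) else 0) :
    2 ^ ((m - 1) / 2) ∣ n :=
  stmt_7_general n m Y hsym hcliff
end

section
/- Let Y be an n×n complex symmetric matrix (Yᵀ = Y) such that D := Y* Y is a diagonal matrix (where * denotes conjugate transpose). Then D Y = Y D; equivalently, writing d_i for the i-th diagonal entry of D, one has Y_{ij} (d_i − d_j) = 0 for all indices i, j. (This is the relation Y_{α ij}(y_F^i − y_F^j) = 0 between Yukawa couplings and the eigenvalues of the diagonalized fermionic trace.) -/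
/-!
For symmetric `Y` we have `Yᴴ = Yᵀᴴ`, so `Y * Yᴴ` is the transpose of `D = Yᴴ * Y`; a diagonal
matrix equals its transpose, hence `Y` is normal and `D * Y = Y * Yᴴ * Y = Y * D`.
Comparing entries of `D * Y = Y * D` for diagonal `D` gives `d i * Y i j = Y i j * d j`.
-/

open Matrix

namespace Matrix

variable {n α : Type*} [Fintype n]

theorem IsSymm.mul_conjTranspose_self [CommSemiring α] [StarRing α] {Y : Matrix n n α}
    (hY : Y.IsSymm) : Y * Yᴴ = (Yᴴ * Y)ᵀ := by
  rw [transpose_mul, ← conjTranspose_transpose_eq_transpose_conjTranspose, hY.eq]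

theorem IsSymm.commute_conjTranspose_mul_self [CommSemiring α] [StarRing α]
    {Y : Matrix n n α} (hY : Y.IsSymm) (hD : (Yᴴ * Y).IsDiag) : Commute (Yᴴ * Y) Y := by
  have hnormal : Y * Yᴴ = Yᴴ * Y := hY.mul_conjTranspose_self.trans hD.isSymm.eq
  show Yᴴ * Y * Y = Y * (Yᴴ * Y)
  rw [← Matrix.mul_assoc, hnormal]

theorem IsDiag.apply_mul_sub_eq_zero_of_commute [CommRing α] {D A : Matrix n n α}
    (hD : D.IsDiag) (hDA : Commute D A) (i j : n) : A i j * (D i i - D j j) = 0 := by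
  classical
  have hij := congrFun₂ hDA.eq i j
  rw [← hD.diagonal_diag, diagonal_mul, mul_diagonal] at hij
  simp only [diag_apply] at hij
  linear_combination hij

end Matrix

/-- If `Y` is complex symmetric and `D := Yᴴ * Y` is diagonal, then `D` commutes
with `Y`; equivalently `Y i j * (D i i - D j j) = 0` for all `i, j`. -/
theorem stmt_8 (n : ℕ) (Y : Matrix (Fin n) (Fin n) ℂ)
    (hsym : Yᵀ = Y) (hdiag : (Yᴴ * Y).IsDiag) :
    (Yᴴ * Y) * Y = Y * (Yᴴ * Y) ∧
    ∀ i j, Y i j * ((Yᴴ * Y) i i - (Yᴴ * Y) j j) = 0 := by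
  have hcomm : Commute (Yᴴ * Y) Y := IsSymm.commute_conjTranspose_mul_self hsym hdiag
  exact ⟨hcomm.eq, hdiag.apply_mul_sub_eq_zero_of_commute hcomm⟩
end

section
/- Let n ≥ 1, m ≥ 1, let Y_1, …, Y_m be n×n complex matrices, each symmetric (Y_αᵀ = Y_α), and let X_1, …, X_m be n×n real diagonal matrices such that Y_α* Y_β + Y_β* Y_α = 2 δ_{αβ} X_α for all α, β. Then for every α: Σ_{β=1}^m Y_β Y_α* Y_β = 2 Y_α X_α − (Σ_{β=1}^m X_β) Y_α. (This identity converts the cubic term of the one-loop Yukawa finiteness condition into an expression linear in the Yukawa couplings.) -/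
/-!
Expand `Yβ Yαᴴ Yβ = Yβ (Yαᴴ Yβ + Yβᴴ Yα) - (Yβ Yβᴴ) Yα`. Summing over `β`, the anticommutation
relation kills every term of the first sum except `β = α`, which gives `2 Yα Xα`; and since `Yβ` is
symmetric, `Yβ Yβᴴ = (Yβᴴ Yβ)ᵀ = Xβ`, so the second sum is `(Σ Xβ) Yα`.
-/

open Matrix
open scoped BigOperators

theorem Finset.sum_mul_mul_eq_of_anticomm {κ R A : Type*} [Fintype κ] [DecidableEq κ]
    [CommSemiring R] [Ring A] [Algebra R A] (y z d : κ → A)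
    (hanti : ∀ α β, z α * y β + z β * y α = if α = β then (2 : R) • d α else 0)
    (hself : ∀ β, y β * z β = d β) (α : κ) :
    ∑ β, y β * z α * y β = (2 : R) • (y α * d α) - (∑ β, d β) * y α := by
  have hexpand : ∀ β, y β * z α * y β = y β * (z α * y β + z β * y α) - y β * z β * y α := by
    intro β
    noncomm_ring
  simp only [hexpand, hanti, hself, Finset.sum_sub_distrib, Finset.sum_mul, mul_ite, mul_zero,
    Finset.sum_ite_eq, Finset.mem_univ, if_true, mul_smul_comm]

theorem Matrix.IsSymm.mul_conjTranspose_self_s9 {n R : Type*} [Fintype n] [CommSemiring R]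
    [StarRing R] {A : Matrix n n R} (hA : A.IsSymm) : A * Aᴴ = (Aᴴ * A)ᵀ := by
  rw [transpose_mul, hA.eq, hA.conjTranspose.eq]

theorem stmt_9_general (n m : ℕ)
    (Y : Fin m → Matrix (Fin n) (Fin n) ℂ)
    (x : Fin m → Fin n → ℝ)
    (hsym : ∀ α, (Y α)ᵀ = Y α)
    (hdiag : ∀ α β, (Y α)ᴴ * Y β + (Y β)ᴴ * Y α =
      if α = β then (2 : ℂ) • Matrix.diagonal (fun i => (x α i : ℂ)) else 0) :
    ∀ α, ∑ β, Y β * (Y α)ᴴ * Y β =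
      (2 : ℂ) • (Y α * Matrix.diagonal (fun i => (x α i : ℂ)))
        - (∑ β, Matrix.diagonal (fun i => (x β i : ℂ))) * Y α := by
  have hconj_self : ∀ β, (Y β)ᴴ * Y β = diagonal (fun i => (x β i : ℂ)) := by
    intro β
    have h := hdiag β β
    rw [if_pos rfl, ← two_smul ℂ] at h
    exact smul_right_injective _ two_ne_zero h
  have hself_conj : ∀ β, Y β * (Y β)ᴴ = diagonal (fun i => (x β i : ℂ)) := fun β => by
    rw [IsSymm.mul_conjTranspose_self_s9 (hsym β), hconj_self, diagonal_transpose]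
  exact Finset.sum_mul_mul_eq_of_anticomm Y (fun β => (Y β)ᴴ) _ hdiag hself_conj

/-- If the symmetric Yukawa couplings satisfy
`Yαᴴ Yβ + Yβᴴ Yα = 2 δ_{αβ} Xα` with `Xα` real diagonal, then the cubic term of
the Yukawa finiteness condition becomes linear:
`Σ_β Yβ Yαᴴ Yβ = 2 Yα Xα − (Σ_β Xβ) Yα`. -/
theorem stmt_9 (n m : ℕ) (hn : 1 ≤ n) (hm : 1 ≤ m)
    (Y : Fin m → Matrix (Fin n) (Fin n) ℂ)
    (x : Fin m → Fin n → ℝ)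
    (hsym : ∀ α, (Y α)ᵀ = Y α)
    (hdiag : ∀ α β, (Y α)ᴴ * Y β + (Y β)ᴴ * Y α =
      if α = β then (2 : ℂ) • Matrix.diagonal (fun i => (x α i : ℂ)) else 0) :
    ∀ α, ∑ β, Y β * (Y α)ᴴ * Y β =
      (2 : ℂ) • (Y α * Matrix.diagonal (fun i => (x α i : ℂ)))
        - (∑ β, Matrix.diagonal (fun i => (x β i : ℂ))) * Y α :=
  stmt_9_general n m Y x hsym hdiag
end

section
/- Let n ≥ 1, m ≥ 1, let Y_1, …, Y_m be n×n complex matrices, each symmetric (Y_αᵀ = Y_α), and let X_1, …, X_m be n×n real diagonal matrices such that Y_α* Y_β + Y_β* Y_α = 2 δ_{αβ} X_α for all α, β. Set D_F := Σ_{β=1}^m X_β, write x_α^i for the i-th diagonal entry of X_α, y_F^i for the i-th diagonal entry of D_F, and y_B^α := trace(X_α). Assume additionally that D_F Y_α = Y_α D_F for every α, and let c : {1,…,n} → ℝ be arbitrary. Then for every α and all indices i, j: the (i,j) entry of 4 Σ_{β=1}^m Y_β Y_α* Y_β plus (Y_α)_{ij} · (2 y_B^α + y_F^i + y_F^j − c_i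 − c_j) equals (Y_α)_{ij} · (4 x_α^i + 4 x_α^j + 2 y_B^α − y_F^i − y_F^j − c_i − c_j). In particular, the Yukawa finiteness condition in standard form holds for Y_α if and only if the quasi-linear condition (Y_α)_{ij} (4 x_α^i + 4 x_α^j + 2 y_B^α − y_F^i − y_F^j − c_i − c_j) = 0 holds for all i, j. -/
/-! Substituting `Y_αᴴ Y_β = 2 δ_{αβ} X_α - Y_βᴴ Y_α` into `Y_β Y_αᴴ Y_β`, and using
`Y_β Y_βᴴ = X_β` (the transpose of `Y_βᴴ Y_β = X_β`, as `Y_β` is symmetric), gives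
`Σ_β Y_β Y_αᴴ Y_β = 2 Y_α X_α - D_F Y_α`; transposing gives `2 X_α Y_α - Y_α D_F` as well.
Adding the two forms, every product with a diagonal matrix becomes an entrywise scaling. -/

open Matrix

namespace Matrix

variable {ι n R : Type*} [DecidableEq ι] [Fintype n] [Field R] [StarRing R] [NeZero (2 : R)]

theorem conjTranspose_mul_self_eq_of_anticomm {Y X : ι → Matrix n n R}
    (h : ∀ α β, (Y α)ᴴ * Y β + (Y β)ᴴ * Y α = if α = β then (2 : R) • X α else 0) (α : ι) :
    (Y α)ᴴ * Y α = X α := by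
  have h2 : (2 : R) • ((Y α)ᴴ * Y α) = (2 : R) • X α := by
    rw [two_smul, h α α, if_pos rfl]
  exact smul_right_injective _ two_ne_zero h2

theorem mul_conjTranspose_self_eq_of_anticomm {Y X : ι → Matrix n n R}
    (hY : ∀ α, (Y α).IsSymm) (hX : ∀ α, (X α).IsSymm)
    (h : ∀ α β, (Y α)ᴴ * Y β + (Y β)ᴴ * Y α = if α = β then (2 : R) • X α else 0) (α : ι) :
    Y α * (Y α)ᴴ = X α := by
  rw [← (hX α).eq, ← conjTranspose_mul_self_eq_of_anticomm h α, transpose_mul,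
    (hY α).conjTranspose.eq, (hY α).eq]

theorem sum_mul_conjTranspose_mul_eq_left [Fintype ι] {Y X : ι → Matrix n n R}
    (hY : ∀ α, (Y α).IsSymm) (hX : ∀ α, (X α).IsSymm)
    (h : ∀ α β, (Y α)ᴴ * Y β + (Y β)ᴴ * Y α = if α = β then (2 : R) • X α else 0) (α : ι) :
    ∑ β, Y β * (Y α)ᴴ * Y β = (2 : R) • (Y α * X α) - (∑ β, X β) * Y α := by
  have hterm : ∀ β, Y β * (Y α)ᴴ * Y β =
      (if α = β then (2 : R) • (Y α * X α) else 0) - X β * Y α := by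
    intro β
    rw [mul_assoc, eq_sub_of_add_eq (h α β), mul_sub, ← mul_assoc,
      mul_conjTranspose_self_eq_of_anticomm hY hX h β]
    split_ifs with hαβ
    · subst hαβ; rw [Matrix.mul_smul]
    · rw [mul_zero]
  rw [Finset.sum_congr rfl fun β _ => hterm β, Finset.sum_sub_distrib,
    Finset.sum_ite_eq Finset.univ α, if_pos (Finset.mem_univ α), Finset.sum_mul]

theorem sum_mul_conjTranspose_mul_eq_right [Fintype ι] {Y X : ι → Matrix n n R}
    (hY : ∀ α, (Y α).IsSymm) (hX : ∀ α, (X α).IsSymm)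
    (h : ∀ α β, (Y α)ᴴ * Y β + (Y β)ᴴ * Y α = if α = β then (2 : R) • X α else 0) (α : ι) :
    ∑ β, Y β * (Y α)ᴴ * Y β = (2 : R) • (X α * Y α) - Y α * ∑ β, X β := by
  simpa only [transpose_sum, transpose_mul, transpose_sub, transpose_smul, (hY _).eq, (hX _).eq,
    (hY α).conjTranspose.eq, ← mul_assoc]
    using congrArg transpose (sum_mul_conjTranspose_mul_eq_left hY hX h α)

theorem four_smul_sum_mul_conjTranspose_mul_apply_of_diagonal [Fintype ι] [DecidableEq n]
    {Y : ι → Matrix n n R} {d : ι → n → R} (hY : ∀ α, (Y α).IsSymm)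
    (h : ∀ α β, (Y α)ᴴ * Y β + (Y β)ᴴ * Y α =
      if α = β then (2 : R) • diagonal (d α) else 0) (α : ι) (i j : n) :
    ((4 : R) • ∑ β, Y β * (Y α)ᴴ * Y β) i j =
      Y α i j * (4 * d α i + 4 * d α j - 2 * ∑ β, d β i - 2 * ∑ β, d β j) := by
  have hX : ∀ α, (diagonal (d α)).IsSymm := fun α => isSymm_diagonal (d α)
  have hD : ∑ β, diagonal (d β) = diagonal (∑ β, d β) :=
    (map_sum (diagonalAddMonoidHom n R) d Finset.univ).symm
  have hL := congrFun₂ (sum_mul_conjTranspose_mul_eq_left hY hX h α) i j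
  have hR := congrFun₂ (sum_mul_conjTranspose_mul_eq_right hY hX h α) i j
  simp only [hD, sub_apply, smul_apply, smul_eq_mul, mul_diagonal, diagonal_mul,
    Finset.sum_apply] at hL hR
  rw [smul_apply, smul_eq_mul]
  linear_combination 2 * hL + 2 * hR

end Matrix

theorem stmt_10_general (n m : ℕ)
    (Y : Fin m → Matrix (Fin n) (Fin n) ℂ)
    (x : Fin m → Fin n → ℝ)
    (hsym : ∀ α, (Y α)ᵀ = Y α)
    (hdiag : ∀ α β, (Y α)ᴴ * Y β + (Y β)ᴴ * Y α =
      if α = β then (2 : ℂ) • Matrix.diagonal (fun i => (x α i : ℂ)) else 0)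
    (c : Fin n → ℝ) :
    (∀ α, ∀ i j,
      ((4 : ℂ) • ∑ β, Y β * (Y α)ᴴ * Y β) i j
        + Y α i j * ((2 * (∑ k, x α k) + (∑ β, x β i) + (∑ β, x β j)
            - c i - c j : ℝ) : ℂ)
      = Y α i j * ((4 * x α i + 4 * x α j + 2 * (∑ k, x α k)
            - (∑ β, x β i) - (∑ β, x β j) - c i - c j : ℝ) : ℂ)) ∧
    (∀ α,
      (∀ i j, ((4 : ℂ) • ∑ β, Y β * (Y α)ᴴ * Y β) i j
        + Y α i j * ((2 * (∑ k, x α k) + (∑ β, x β i) + (∑ β, x β j)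
            - c i - c j : ℝ) : ℂ) = 0) ↔
      (∀ i j, Y α i j * ((4 * x α i + 4 * x α j + 2 * (∑ k, x α k)
            - (∑ β, x β i) - (∑ β, x β j) - c i - c j : ℝ) : ℂ) = 0)) := by
  refine ⟨fun α i j => ?_, fun α => forall₂_congr fun i j => ?_⟩
  all_goals
    rw [four_smul_sum_mul_conjTranspose_mul_apply_of_diagonal hsym hdiag α i j]
    push_cast
  · ring
  · constructor <;> intro h <;> linear_combination h

/-- With diagonalized `x`, i.e. `Yαᴴ Yβ + Yβᴴ Yα = 2 δ_{αβ} Xα` with `Xα` real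
diagonal, and with `D_F := Σ_β Xβ` commuting with every `Yα`, the standard form
of the Yukawa finiteness condition turns, entrywise, into the quasi-linear
expression; in particular the two conditions are equivalent. -/
theorem stmt_10 (n m : ℕ) (hn : 1 ≤ n) (hm : 1 ≤ m)
    (Y : Fin m → Matrix (Fin n) (Fin n) ℂ)
    (x : Fin m → Fin n → ℝ)
    (hsym : ∀ α, (Y α)ᵀ = Y α)
    (hdiag : ∀ α β, (Y α)ᴴ * Y β + (Y β)ᴴ * Y α =
      if α = β then (2 : ℂ) • Matrix.diagonal (fun i => (x α i : ℂ)) else 0)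
    (hcomm : ∀ α,
      (∑ β, Matrix.diagonal (fun i => (x β i : ℂ))) * Y α
        = Y α * (∑ β, Matrix.diagonal (fun i => (x β i : ℂ))))
    (c : Fin n → ℝ) :
    (∀ α, ∀ i j,
      ((4 : ℂ) • ∑ β, Y β * (Y α)ᴴ * Y β) i j
        + Y α i j * ((2 * (∑ k, x α k) + (∑ β, x β i) + (∑ β, x β j)
            - c i - c j : ℝ) : ℂ)
      = Y α i j * ((4 * x α i + 4 * x α j + 2 * (∑ k, x α k)
            - (∑ β, x β i) - (∑ β, x β j) - c i - c j : ℝ) : ℂ)) ∧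
    (∀ α,
      (∀ i j, ((4 : ℂ) • ∑ β, Y β * (Y α)ᴴ * Y β) i j
        + Y α i j * ((2 * (∑ k, x α k) + (∑ β, x β i) + (∑ β, x β j)
            - c i - c j : ℝ) : ℂ) = 0) ↔
      (∀ i j, Y α i j * ((4 * x α i + 4 * x α j + 2 * (∑ k, x α k)
            - (∑ β, x β i) - (∑ β, x β j) - c i - c j : ℝ) : ℂ) = 0)) :=
  stmt_10_general n m Y x hsym hdiag c
end
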